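/- (Proximal operator of the Kullback–Leibler conjugate.) Let r ≥ 0, b ≥ 0, σ > 0, and define f* : ℝ → ℝ∪{+∞} by f*(z) = −z r − b log(1 − z) if z ≤ 1 and (b = 0 or z < 1), and f*(z) = +∞ otherwise (with the convention 0·log 0 = 0). Then for every z ∈ ℝ, the unique minimizer of u ↦ (1/(2σ))(u − z)² + f*(u) is u* = ½( z + 1 + σ r − √( (z − 1 + σ r)² + 4 σ b ) ). -/
import Mathlib


open scoped Classical

/-- Proximal operator of the Kullback–Leibler conjugate.
For `r ≥ 0`, `b ≥ 0`, `σ > 0` and `f*(z) = −zr − b log(1−z)` if `z ≤ 1` and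
(`b = 0` or `z < 1`), `f*(z) = +∞` otherwise, the unique minimizer of
`u ↦ (1/(2σ))(u − z)² + f*(u)` is `u* = ½(z + 1 + σr − √((z − 1 + σr)² + 4σb))`. -/
theorem prox_of_KL_conjugate (r b σ z : ℝ) (hr : 0 ≤ r) (hb : 0 ≤ b) (hσ : 0 < σ) :
    let fstar : ℝ → EReal := fun u =>
      if u ≤ 1 ∧ (b = 0 ∨ u < 1) then (((-u * r - b * Real.log (1 - u)) : ℝ) : EReal)
      else (⊤ : EReal)
    let φ : ℝ → EReal := fun u => (((1 / (2 * σ)) * (u - z) ^ 2 : ℝ) : EReal) + fstar u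
    let ustar : ℝ := (z + 1 + σ * r - Real.sqrt ((z - 1 + σ * r) ^ 2 + 4 * σ * b)) / 2
    (∀ u, φ ustar ≤ φ u) ∧ (∀ u, u ≠ ustar → φ ustar < φ u) := by
  intro fstar φ ustar
  have hφ : ∀ u, φ u = (((1 / (2 * σ)) * (u - z) ^ 2 : ℝ) : EReal) +
      (if u ≤ 1 ∧ (b = 0 ∨ u < 1) then (((-u * r - b * Real.log (1 - u)) : ℝ) : EReal)
       else (⊤ : EReal)) := fun u => rfl
  set s : ℝ := Real.sqrt ((z - 1 + σ * r) ^ 2 + 4 * σ * b) with hsdef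
  have hs0 : 0 ≤ s := Real.sqrt_nonneg _
  have hssq : s ^ 2 = (z - 1 + σ * r) ^ 2 + 4 * σ * b :=
    Real.sq_sqrt (by nlinarith [mul_nonneg hσ.le hb, sq_nonneg (z - 1 + σ * r)])
  have hsa : z - 1 + σ * r ≤ s := by
    nlinarith [mul_nonneg hσ.le hb, sq_nonneg (s - (z - 1 + σ * r)), sq_nonneg (s + (z - 1 + σ * r))]
  have hust : ustar = (z + 1 + σ * r - s) / 2 := rfl
  have hu1 : ustar ≤ 1 := by rw [hust]; linarith
  have hdom : ustar ≤ 1 ∧ (b = 0 ∨ ustar < 1) := by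
    refine ⟨hu1, ?_⟩
    rcases eq_or_lt_of_le hb with hb0 | hbpos
    · exact Or.inl hb0.symm
    · right
      have hlt : z - 1 + σ * r < s := by nlinarith [mul_pos hσ hbpos]
      rw [hust]; linarith
  -- key real inequality
  have key : ∀ u, u ≤ 1 → (b = 0 ∨ u < 1) → u ≠ ustar →
      (1 / (2 * σ)) * (ustar - z) ^ 2 + (-ustar * r - b * Real.log (1 - ustar)) <
      (1 / (2 * σ)) * (u - z) ^ 2 + (-u * r - b * Real.log (1 - u)) := by
    intro u hule hdisj hne
    rw [hust] at hne ⊢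
    rcases eq_or_lt_of_le hb with hb0 | hbpos
    · -- b = 0
      have hb0' : b = 0 := hb0.symm
      subst hb0'
      have hs' : s = |z - 1 + σ * r| := by
        rw [hsdef, show (z - 1 + σ * r) ^ 2 + 4 * σ * 0 = (z - 1 + σ * r) ^ 2 by ring]
        exact Real.sqrt_sq_eq_abs _
      simp only [zero_mul, sub_zero]
      rcases le_or_gt (z - 1 + σ * r) 0 with hA | hA
      · -- ustar = z + σ r
        rw [abs_of_nonpos hA] at hs'
        have hne' : u - (z + σ * r) ≠ 0 := by
          intro h
          apply hne
          rw [hs']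
          linarith
        have hpos : 0 < (u - (z + σ * r)) ^ 2 := by positivity
        have halg : (1 / (2 * σ)) * (u - z) ^ 2 + (-u * r) -
            ((1 / (2 * σ)) * ((z + 1 + σ * r - s) / 2 - z) ^ 2 +
              (-((z + 1 + σ * r - s) / 2) * r)) =
            (u - (z + σ * r)) ^ 2 / (2 * σ) := by
          rw [hs']
          field_simp
          ring
        have := div_pos hpos (by linarith : (0:ℝ) < 2 * σ)
        linarith
      · -- ustar = 1
        rw [abs_of_pos hA] at hs'
        have hu1' : u < 1 := by
          rcases lt_or_eq_of_le hule with h | h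
          · exact h
          · exfalso; apply hne; rw [hs']; linarith
        have halg : (1 / (2 * σ)) * (u - z) ^ 2 + (-u * r) -
            ((1 / (2 * σ)) * ((z + 1 + σ * r - s) / 2 - z) ^ 2 +
              (-((z + 1 + σ * r - s) / 2) * r)) =
            (1 - u) * (2 * (z - 1 + σ * r) + (1 - u)) / (2 * σ) := by
          rw [hs']
          field_simp
          ring
        have hpos : 0 < (1 - u) * (2 * (z - 1 + σ * r) + (1 - u)) / (2 * σ) := by
          apply div_pos _ (by linarith : (0:ℝ) < 2 * σ)
          apply mul_pos (by linarith)
          nlinarith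
        linarith
    · -- b > 0
      set U : ℝ := (z + 1 + σ * r - s) / 2 with hU
      have ht1 : 0 < 1 - U := by
        have hlt : z - 1 + σ * r < s := by nlinarith [mul_pos hσ hbpos]
        rw [hU]; linarith
      have ht2 : 0 < 1 - u := by
        rcases hdisj with h | h
        · exact absurd h hbpos.ne'
        · linarith
      have hquad : (1 - U) ^ 2 + (z - 1 + σ * r) * (1 - U) = σ * b := by
        rw [hU]; nlinarith [hssq]
      have hxne : (1 - u) / (1 - U) ≠ 1 := by
        intro h
        apply hne
        rw [div_eq_one_iff_eq (ne_of_gt ht1)] at h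
        rw [hU]
        linarith
      have hlog : Real.log ((1 - u) / (1 - U)) < (1 - u) / (1 - U) - 1 :=
        Real.log_lt_sub_one_of_pos (div_pos ht2 ht1) hxne
      rw [Real.log_div (ne_of_gt ht2) (ne_of_gt ht1)] at hlog
      have hbval : b = (1 - U) * (1 - U + (z - 1 + σ * r)) / σ := by
        rw [eq_div_iff (ne_of_gt hσ)]
        linear_combination hquad - hssq / 2
      have hfrac : b * ((1 - u) / (1 - U) - 1) = (1 - U + (z - 1 + σ * r)) * (U - u) / σ := by
        rw [hbval]
        field_simp
        ring
      have h1 : b * (Real.log (1 - u) - Real.log (1 - U)) <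
          (1 - U + (z - 1 + σ * r)) * (U - u) / σ := by
        rw [← hfrac]
        calc b * (Real.log (1 - u) - Real.log (1 - U))
            < b * ((1 - u) / (1 - U) - 1) := (mul_lt_mul_iff_right₀ hbpos).2 hlog
          _ = _ := rfl
      have halg : (1 / (2 * σ)) * (u - z) ^ 2 - (1 / (2 * σ)) * (U - z) ^ 2
          - r * (u - U) - (1 - U + (z - 1 + σ * r)) * (U - u) / σ
          = (u - U) ^ 2 / (2 * σ) := by
        rw [hU]
        field_simp
        ring
      have hd2 : 0 ≤ (u - U) ^ 2 / (2 * σ) := by positivity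
      linarith [h1, halg, hd2]
  -- assemble
  have hustar_val : φ ustar = (((1 / (2 * σ)) * (ustar - z) ^ 2 +
      (-ustar * r - b * Real.log (1 - ustar)) : ℝ) : EReal) := by
    rw [hφ, if_pos hdom, ← EReal.coe_add]
  have main : ∀ u, u ≠ ustar → φ ustar < φ u := by
    intro u hu
    rw [hustar_val, hφ u]
    by_cases hdomu : u ≤ 1 ∧ (b = 0 ∨ u < 1)
    · rw [if_pos hdomu, ← EReal.coe_add]
      exact_mod_cast key u hdomu.1 hdomu.2 hu
    · rw [if_neg hdomu]
      rw [EReal.add_top_of_ne_bot (EReal.coe_ne_bot _)]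
      exact EReal.coe_lt_top _
  refine ⟨fun u => ?_, main⟩
  by_cases h : u = ustar
  · rw [h]
  · exact (main u h).le
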